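/- arXiv:1704.05554 — 4 statements merged into one kernel-verified Lean document; each statement's English description precedes it below -/
import Mathlib

section
/- Let X be a type of solutions, f : X → ℝ a fitness function, B a metric space with distance d, and b : X → B a behavior characterization. Define the domination effect e(x,y) = f(x) − f(y) − d(b(x), b(y)), and say x dominates y (written x ⪰ y) iff e(x,y) ≥ 0. Then the relation ⪰ is transitive: for all x, y, z ∈ X, if x ⪰ y and y ⪰ z then x ⪰ z. -/
/-- The behavior domination relation `x ⪰ y`, defined by the domination effect
`e(x,y) = f(x) - f(y) - d(b(x), b(y))` being nonnegative, is transitive. -/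
theorem behavior_domination_transitive
    {X B : Type*} [MetricSpace B] (f : X → ℝ) (b : X → B)
    (e : X → X → ℝ) (he : ∀ x y, e x y = f x - f y - dist (b x) (b y))
    (x y z : X) (hxy : e x y ≥ 0) (hyz : e y z ≥ 0) :
    e x z ≥ 0 := by
  have h := dist_triangle (b x) (b y) (b z)
  simp only [he] at *
  linarith
end

section
/- Let f : X → ℝ, let n be a positive natural number, and let b : X → ℝⁿ, with the behavior distance given by the supremum norm d(b(x), b(y)) = max_i |b(x)_i − b(y)_i|. Then for all x, y ∈ X, f(x) − f(y) − d(b(x), b(y)) ≥ 0 if and only if for every coordinate i, both f(x) + b(x)_i ≥ f(y) + b(y)_i and f(x) − b(x)_i ≥ f(y) − b(y)_i. That is, behavior domination under the sup-norm distance coincides with weak Pareto dominance in the 2n objectives f + b_i and f − b_i. -/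
/-- With behaviors in `ℝⁿ` (`n > 0`) and the sup-norm behavior distance,
behavior domination coincides with weak Pareto dominance in the `2n`
objectives `f + bᵢ` and `f - bᵢ`. -/
theorem behavior_domination_sup_norm_iff_pareto
    {X : Type*} (n : ℕ) (hn : 0 < n) (f : X → ℝ) (b : X → (Fin n → ℝ))
    (x y : X) :
    f x - f y - dist (b x) (b y) ≥ 0 ↔
      ∀ i : Fin n, f x + b x i ≥ f y + b y i ∧ f x - b x i ≥ f y - b y i := by
  constructor
  · intro h i
    have hd : dist (b x i) (b y i) ≤ dist (b x) (b y) := dist_le_pi_dist (b x) (b y) i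
    have habs : |b x i - b y i| ≤ f x - f y := by
      rw [Real.dist_eq] at hd; linarith
    rw [abs_le] at habs
    constructor <;> linarith [habs.1, habs.2]
  · intro h
    have hfy : 0 ≤ f x - f y := by
      obtain ⟨i, _⟩ := Fin.pos_iff_nonempty.mp hn
      have := h ⟨0, hn⟩
      linarith [this.1, this.2]
    have : dist (b x) (b y) ≤ f x - f y := by
      rw [dist_pi_le_iff hfy]
      intro i
      rw [Real.dist_eq, abs_le]
      exact ⟨by linarith [(h i).1], by linarith [(h i).2]⟩
    linarith
end

section
/- LSNF (with equal weights on normalized fitness and normalized novelty) exhibits spooky action at a distance on the following instance. Population P has (fitness, novelty) pairs x₀ = (f₀, 21/2), x₁ = (f₀+11, 11/2), x₂ = (f₀+10, 11/2), x₃ = (f₀, 21/2); its LSNF scores are 1, 1, 10/11, 1 respectively, so x₂ is the unique minimizer (the deleted solution). Population P′ has pairs x₀ = (f₀, 21/2), x₁ = (f₀+11, 11/2), x₂ = (f₀+10, 6), x₄ = (f₀, 23/2); its LSNF scores are 5/6, 1, 10/11 + 1/12, 1 respectively, so x₀ is the unique minimizer (the deleted solution). -/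
/-- The LSNF score with equal weights: normalized fitness plus normalized novelty. -/
noncomputable def lsnfScore (f n fmin fmax nmin nmax : ℝ) : ℝ :=
  (f - fmin) / (fmax - fmin) + (n - nmin) / (nmax - nmin)

set_option maxHeartbeats 1000000 in
/-- Spookiness of LSNF: with population `P` having (fitness, novelty) pairs
`(f₀, 21/2), (f₀+11, 11/2), (f₀+10, 11/2), (f₀, 21/2)` the LSNF scores are
`1, 1, 10/11, 1`, so `x₂` is the unique minimizer; with population `P'` having
pairs `(f₀, 21/2), (f₀+11, 11/2), (f₀+10, 6), (f₀, 23/2)` the LSNF scores are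
`5/6, 1, 10/11 + 1/12, 1`, so `x₀` is the unique minimizer. -/
theorem lsnf_spooky_action (f₀ : ℝ) :
    let fP : Fin 4 → ℝ := ![f₀, f₀ + 11, f₀ + 10, f₀]
    let nP : Fin 4 → ℝ := ![21 / 2, 11 / 2, 11 / 2, 21 / 2]
    let fQ : Fin 4 → ℝ := ![f₀, f₀ + 11, f₀ + 10, f₀]
    let nQ : Fin 4 → ℝ := ![21 / 2, 11 / 2, 6, 23 / 2]
    let scoreP : Fin 4 → ℝ := fun i => lsnfScore (fP i) (nP i)
      (Finset.univ.inf' Finset.univ_nonempty fP)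
      (Finset.univ.sup' Finset.univ_nonempty fP)
      (Finset.univ.inf' Finset.univ_nonempty nP)
      (Finset.univ.sup' Finset.univ_nonempty nP)
    let scoreQ : Fin 4 → ℝ := fun i => lsnfScore (fQ i) (nQ i)
      (Finset.univ.inf' Finset.univ_nonempty fQ)
      (Finset.univ.sup' Finset.univ_nonempty fQ)
      (Finset.univ.inf' Finset.univ_nonempty nQ)
      (Finset.univ.sup' Finset.univ_nonempty nQ)
    scoreP 0 = 1 ∧ scoreP 1 = 1 ∧ scoreP 2 = 10 / 11 ∧ scoreP 3 = 1 ∧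
    (∀ i : Fin 4, i ≠ 2 → scoreP 2 < scoreP i) ∧
    scoreQ 0 = 5 / 6 ∧ scoreQ 1 = 1 ∧ scoreQ 2 = 10 / 11 + 1 / 12 ∧
    scoreQ 3 = 1 ∧
    (∀ i : Fin 4, i ≠ 0 → scoreQ 0 < scoreQ i) := by
  intro fP nP fQ nQ scoreP scoreQ
  have huniv : (Finset.univ : Finset (Fin 4)) = {0,1,2,3} := by decide
  have hP0 : scoreP 0 = 1 := by
    simp [scoreP, lsnfScore, fP, nP, huniv, Finset.inf'_insert, Finset.sup'_insert]; norm_num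
  have hP1 : scoreP 1 = 1 := by
    simp [scoreP, lsnfScore, fP, nP, huniv, Finset.inf'_insert, Finset.sup'_insert]; norm_num
  have hP2 : scoreP 2 = 10 / 11 := by
    simp [scoreP, lsnfScore, fP, nP, huniv, Finset.inf'_insert, Finset.sup'_insert]; norm_num
  have hP3 : scoreP 3 = 1 := by
    simp [scoreP, lsnfScore, fP, nP, huniv, Finset.inf'_insert, Finset.sup'_insert]; norm_num
  have hQ0 : scoreQ 0 = 5 / 6 := by
    simp [scoreQ, lsnfScore, fQ, nQ, huniv, Finset.inf'_insert, Finset.sup'_insert]; norm_num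
  have hQ1 : scoreQ 1 = 1 := by
    simp [scoreQ, lsnfScore, fQ, nQ, huniv, Finset.inf'_insert, Finset.sup'_insert]; norm_num
  have hQ2 : scoreQ 2 = 10 / 11 + 1 / 12 := by
    simp [scoreQ, lsnfScore, fQ, nQ, huniv, Finset.inf'_insert, Finset.sup'_insert]; norm_num
  have hQ3 : scoreQ 3 = 1 := by
    simp [scoreQ, lsnfScore, fQ, nQ, huniv, Finset.inf'_insert, Finset.sup'_insert]; norm_num
  refine ⟨hP0, hP1, hP2, hP3, ?_, hQ0, hQ1, hQ2, hQ3, ?_⟩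
  · intro i hi
    fin_cases i
    · show _ < scoreP 0; rw [hP2, hP0]; norm_num
    · show _ < scoreP 1; rw [hP2, hP1]; norm_num
    · exact absurd rfl hi
    · show _ < scoreP 3; rw [hP2, hP3]; norm_num
  · intro i hi
    fin_cases i
    · exact absurd rfl hi
    · show _ < scoreQ 1; rw [hQ0, hQ1]; norm_num
    · show _ < scoreQ 2; rw [hQ0, hQ2]; norm_num
    · show _ < scoreQ 3; rw [hQ0, hQ3]; norm_num
end

section
/- NSLC (Pareto dominance on the two objectives local-competition score and novelty) exhibits spooky action at a distance on the following instance. A point (a, b) ∈ ℝ² Pareto-dominates (c, e) iff a ≥ c, b ≥ e, and (a, b) ≠ (c, e). For population P, the (local competition, novelty) pairs of x₀, x₁, x₂, x₃ are (0, 21/2), (2, 11/2), (1, 11/2), (0, 21/2); the point of x₂ is Pareto-dominated by the point of x₁, and no other point is Pareto-dominated by another. For population P′, the pairs of x₀, x₁, x₂, x₄ are (0, 21/2), (2, 11/2), (1, 6), (0, 23/2); the point of x₀ is Pareto-dominated by the point of x₄, and no other point is Pareto-dominated by another; in particular the point of x₂ is no longer dominated. -/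
/-- Pareto dominance on ℝ²: `(a, b)` dominates `(c, e)` iff `a ≥ c`, `b ≥ e`,
and the pairs are not equal. -/
def paretoDom (p q : ℝ × ℝ) : Prop :=
  p.1 ≥ q.1 ∧ p.2 ≥ q.2 ∧ p ≠ q

theorem paretoDom_iff_lt {p q : ℝ × ℝ} : paretoDom p q ↔ q < p := by
  rw [lt_iff_le_and_ne, Prod.le_def, paretoDom, ne_comm]
  exact and_assoc.symm

theorem paretoDom_iff {p q : ℝ × ℝ} :
    paretoDom p q ↔ q.1 < p.1 ∧ q.2 ≤ p.2 ∨ q.1 ≤ p.1 ∧ q.2 < p.2 := by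
  rw [paretoDom_iff_lt, Prod.lt_iff]

/-- Spookiness of NSLC: for population `P` the (local-competition, novelty)
pairs of `x₀, x₁, x₂, x₃` are `(0, 21/2), (2, 11/2), (1, 11/2), (0, 21/2)`;
`x₁`'s point dominates `x₂`'s and no other point is dominated by another. For
population `P'` the pairs of `x₀, x₁, x₂, x₄` are
`(0, 21/2), (2, 11/2), (1, 6), (0, 23/2)`; `x₄`'s point dominates `x₀`'s and no
other point is dominated by another; in particular the point of `x₂` is no
longer dominated. -/
theorem nslc_spooky_action :
    let P : Fin 4 → ℝ × ℝ :=
      ![(0, 21 / 2), (2, 11 / 2), (1, 11 / 2), (0, 21 / 2)]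
    let Q : Fin 4 → ℝ × ℝ :=
      ![(0, 21 / 2), (2, 11 / 2), (1, 6), (0, 23 / 2)]
    paretoDom (P 1) (P 2) ∧
    (∀ i j : Fin 4, paretoDom (P i) (P j) → i = 1 ∧ j = 2) ∧
    paretoDom (Q 3) (Q 0) ∧
    (∀ i j : Fin 4, paretoDom (Q i) (Q j) → i = 3 ∧ j = 0) ∧
    ¬ ∃ j : Fin 4, paretoDom (Q j) (Q 2) := by
  intro P Q
  simp only [paretoDom_iff, not_exists]
  refine ⟨?_, fun i j => ?_, ?_, fun i j => ?_, fun j => ?_⟩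
  all_goals try fin_cases i
  all_goals try fin_cases j
  all_goals norm_num [P, Q, Matrix.cons_val_two, Matrix.cons_val_three, Fin.ext_iff]
end
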